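/- arXiv:1003.3329 — 5 statements merged into one kernel-verified Lean document; each statement's English description precedes it below -/
import Mathlib

section
/- Let X be a 2k-independent subset of the set of 1-dimensional subspaces of V with |X| = n'. Then the map sending each k-element subset {i_1,...,i_k} of {1,...,n'} to P_{i_1} + ... + P_{i_k} is an isometric embedding of the Johnson graph J(n',k) into the Grassmann graph Γ_k(V). -/
open Module

/-- The Grassmann graph `Γ_k(V)`. -/
def GrassmannGraph (K V : Type*) [DivisionRing K] [AddCommGroup V] [Module K V] (k : ℕ) :
    SimpleGraph {S : Submodule K V // finrank K S = k} where
  Adj S U := S ≠ U ∧ finrank K ↥(S.1 ⊓ U.1) = k - 1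
  symm := by
    constructor
    rintro S U ⟨h1, h2⟩
    refine ⟨h1.symm, ?_⟩
    rwa [inf_comm]
  loopless := by constructor; rintro S ⟨h, -⟩; exact h rfl

/-- The Johnson graph `J(n,k)`. -/
def JohnsonGraph (n k : ℕ) : SimpleGraph {A : Finset (Fin n) // A.card = k} where
  Adj A B := A ≠ B ∧ (A.1 ∩ B.1).card = k - 1
  symm := by
    constructor
    rintro A B ⟨h1, h2⟩
    refine ⟨h1.symm, ?_⟩
    rwa [Finset.inter_comm]
  loopless := by constructor; rintro A ⟨h, -⟩; exact h rfl

/-!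
Both distances are computed by the same device: a function `φ` on vertices that grows by at most
one along each edge bounds the distance from below by `φ v - φ u`. In `J(n', k)` take
`φ X = |X ∩ B|`, in `Γ_k(V)` take `φ S = dim (S ⊓ f B)`. Swapping one element of `A \ B` for one
of `B \ A` at a time gives a walk from `A` to `B` of length `|A \ B| = k - |A ∩ B|`, which attains
the bound in `J(n', k)`. Because any `2k` of the `P i` are independent,
`dim (f A ⊓ f B) = |A ∩ B|`, so `f` maps adjacent sets to adjacent subspaces and carries this walk
to a walk in `Γ_k(V)` attaining the bound there too.
-/

namespace SimpleGraph

variable {α : Type*} {G : SimpleGraph α} {φ : α → ℕ}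

theorem Walk.apply_le_apply_add_length (hφ : ∀ x y, G.Adj x y → φ y ≤ φ x + 1) :
    ∀ {u v : α} (p : G.Walk u v), φ v ≤ φ u + p.length
  | _, _, .nil => by simp
  | _, _, .cons h q => by
    have := hφ _ _ h
    have := q.apply_le_apply_add_length hφ
    rw [Walk.length_cons]
    omega

theorem Walk.dist_eq_length_of_apply_add_length_le {u v : α} (p : G.Walk u v)
    (hφ : ∀ x y, G.Adj x y → φ y ≤ φ x + 1) (hp : φ u + p.length ≤ φ v) :
    G.dist u v = p.length := by
  obtain ⟨q, hq⟩ := Reachable.exists_walk_length_eq_dist ⟨p⟩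
  have := q.apply_le_apply_add_length hφ
  exact le_antisymm (dist_le p) (by omega)

end SimpleGraph

namespace JohnsonGraph

variable {n k : ℕ}

theorem card_inter_le_card_inter_add_one (C : Finset (Fin n))
    {A B : {A : Finset (Fin n) // A.card = k}} (h : (JohnsonGraph n k).Adj A B) :
    (B.1 ∩ C).card ≤ (A.1 ∩ C).card + 1 := by
  obtain ⟨-, hAB⟩ := h
  have hsub : B.1 ∩ C ⊆ (B.1 \ A.1) ∪ (A.1 ∩ C) := by
    intro x hx
    by_cases hxA : x ∈ A.1 <;> simp_all
  have hBA := Finset.card_sdiff_add_card_inter B.1 A.1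
  rw [Finset.inter_comm, hAB, B.2] at hBA
  have := (Finset.card_le_card hsub).trans (Finset.card_union_le _ _)
  omega

theorem exists_adj_card_sdiff_eq {A B : {A : Finset (Fin n) // A.card = k}} {a : Fin n}
    (ha : a ∈ A.1 \ B.1) :
    ∃ A', (JohnsonGraph n k).Adj A A' ∧ A'.1 \ B.1 = (A.1 \ B.1).erase a := by
  obtain ⟨haA, haB⟩ := Finset.mem_sdiff.1 ha
  have hcard : (B.1 \ A.1).card = (A.1 \ B.1).card := by
    have hA := Finset.card_sdiff_add_card_inter A.1 B.1
    have hB := Finset.card_sdiff_add_card_inter B.1 A.1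
    rw [Finset.inter_comm, A.2] at hA
    rw [B.2] at hB
    omega
  obtain ⟨b, hb⟩ : (B.1 \ A.1).Nonempty := by
    rw [← Finset.card_pos, hcard]
    exact Finset.card_pos.2 ⟨a, ha⟩
  obtain ⟨hbB, hbA⟩ := Finset.mem_sdiff.1 hb
  have hbA' : b ∉ A.1.erase a := fun h => hbA (Finset.mem_of_mem_erase h)
  have hk : 1 ≤ k := A.2 ▸ Finset.card_pos.2 ⟨a, haA⟩
  refine ⟨⟨insert b (A.1.erase a), ?_⟩, ⟨fun h => hbA ?_, ?_⟩, ?_⟩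
  · rw [Finset.card_insert_of_notMem hbA', Finset.card_erase_of_mem haA, A.2]
    omega
  · rw [h]
    exact Finset.mem_insert_self _ _
  · have : A.1 ∩ insert b (A.1.erase a) = A.1.erase a := by
      rw [Finset.inter_insert_of_notMem hbA, Finset.inter_eq_right.2 (Finset.erase_subset _ _)]
    rw [this, Finset.card_erase_of_mem haA, A.2]
  · ext x
    by_cases hxb : x = b <;> simp_all [and_assoc]

theorem exists_walk_length_eq_card_sdiff (A B : {A : Finset (Fin n) // A.card = k}) :
    ∃ p : (JohnsonGraph n k).Walk A B, p.length = (A.1 \ B.1).card := by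
  induction hd : (A.1 \ B.1).card generalizing A with
  | zero =>
    have hsub : A.1 ⊆ B.1 := Finset.sdiff_eq_empty_iff_subset.1 (Finset.card_eq_zero.1 hd)
    obtain rfl : A = B := Subtype.ext (Finset.eq_of_subset_of_card_le hsub (by rw [A.2, B.2]))
    exact ⟨.nil, rfl⟩
  | succ d ih =>
    obtain ⟨a, ha⟩ : (A.1 \ B.1).Nonempty := by rw [← Finset.card_pos]; omega
    obtain ⟨A', hadj, hA'⟩ := exists_adj_card_sdiff_eq ha
    obtain ⟨p, hp⟩ := ih A' (by rw [hA', Finset.card_erase_of_mem ha, hd]; rfl)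
    exact ⟨.cons hadj p, by rw [SimpleGraph.Walk.length_cons, hp]⟩

end JohnsonGraph

theorem GrassmannGraph.finrank_inf_le_finrank_inf_add_one {K V : Type*} [DivisionRing K]
    [AddCommGroup V] [Module K V] [FiniteDimensional K V] {k : ℕ} (T : Submodule K V)
    {S U : {S : Submodule K V // finrank K S = k}} (h : (GrassmannGraph K V k).Adj S U) :
    finrank K ↥(U.1 ⊓ T) ≤ finrank K ↥(S.1 ⊓ T) + 1 := by
  obtain ⟨-, hSU⟩ := h
  rw [inf_comm] at hSU
  have hsum := Submodule.finrank_sup_add_finrank_inf_eq (U.1 ⊓ T) (U.1 ⊓ S.1)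
  have hsup : finrank K ↥((U.1 ⊓ T) ⊔ (U.1 ⊓ S.1)) ≤ k :=
    (Submodule.finrank_mono (sup_le inf_le_left inf_le_left)).trans_eq U.2
  have hinf : finrank K ↥((U.1 ⊓ T) ⊓ (U.1 ⊓ S.1)) ≤ finrank K ↥(S.1 ⊓ T) :=
    Submodule.finrank_mono
      (le_inf (inf_le_right.trans inf_le_right) (inf_le_left.trans inf_le_right))
  have hU : finrank K ↥(U.1 ⊓ T) ≤ k := (Submodule.finrank_mono inf_le_left).trans_eq U.2
  omega

theorem finrank_sup_inf_sup_eq_card_inter {K V ι : Type*} [DivisionRing K] [AddCommGroup V]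
    [Module K V] [FiniteDimensional K V] [DecidableEq ι] {P : ι → Submodule K V} {m : ℕ}
    (hind : ∀ s : Finset ι, s.card ≤ m → finrank K ↥(s.sup P) = s.card)
    {A B : Finset ι} (hAB : (A ∪ B).card ≤ m) :
    finrank K ↥(A.sup P ⊓ B.sup P) = (A ∩ B).card := by
  have hA := hind A ((Finset.card_le_card Finset.subset_union_left).trans hAB)
  have hB := hind B ((Finset.card_le_card Finset.subset_union_right).trans hAB)
  have hsup := hind (A ∪ B) hAB
  have hsum := Submodule.finrank_sup_add_finrank_inf_eq (A.sup P) (B.sup P)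
  rw [← Finset.sup_union] at hsum
  have := Finset.card_inter_add_card_union A B
  omega

theorem GrassmannGraph.adj_of_johnsonGraph_adj {K V : Type*} [DivisionRing K] [AddCommGroup V]
    [Module K V] {n k : ℕ}
    {f : {A : Finset (Fin n) // A.card = k} → {S : Submodule K V // finrank K S = k}}
    (hf : ∀ A B, finrank K ↥((f A).1 ⊓ (f B).1) = (A.1 ∩ B.1).card)
    {A B : {A : Finset (Fin n) // A.card = k}} (h : (JohnsonGraph n k).Adj A B) :
    (GrassmannGraph K V k).Adj (f A) (f B) := by
  obtain ⟨hne, hAB⟩ := h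
  refine ⟨fun heq => hne ?_, by rw [hf, hAB]⟩
  have hk := hf A B
  rw [heq, inf_idem, (f B).2, hAB] at hk
  have hA := Finset.card_eq_zero.1 (A.2.trans (by omega))
  have hB := Finset.card_eq_zero.1 (B.2.trans (by omega))
  exact Subtype.ext (hA.trans hB.symm)

theorem stmt4_general (K V : Type*) [DivisionRing K] [AddCommGroup V] [Module K V]
    [FiniteDimensional K V] (k n' : ℕ)
    (P : Fin n' → Submodule K V)
    (hind : ∀ s : Finset (Fin n'), s.card ≤ 2 * k → finrank K ↥(s.sup P) = s.card)
    (f : {A : Finset (Fin n') // A.card = k} → {S : Submodule K V // finrank K S = k})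
    (hf : ∀ A, (f A).1 = A.1.sup P) :
    ∀ A B, (GrassmannGraph K V k).dist (f A) (f B) = (JohnsonGraph n' k).dist A B := by
  have hinter : ∀ A B, finrank K ↥((f A).1 ⊓ (f B).1) = (A.1 ∩ B.1).card := fun A B => by
    rw [hf, hf]
    exact finrank_sup_inf_sup_eq_card_inter hind
      ((Finset.card_union_le _ _).trans (by rw [A.2, B.2, two_mul]))
  let F : JohnsonGraph n' k →g GrassmannGraph K V k :=
    ⟨f, GrassmannGraph.adj_of_johnsonGraph_adj hinter⟩
  intro A B
  obtain ⟨p, hp⟩ := JohnsonGraph.exists_walk_length_eq_card_sdiff A B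
  have hsplit := Finset.card_sdiff_add_card_inter A.1 B.1
  rw [A.2] at hsplit
  have hJ : (JohnsonGraph n' k).dist A B = p.length :=
    p.dist_eq_length_of_apply_add_length_le (φ := fun X => (X.1 ∩ B.1).card)
      (fun _ _ => JohnsonGraph.card_inter_le_card_inter_add_one B.1)
      (by simp only [Finset.inter_self, B.2]; omega)
  have hG : (GrassmannGraph K V k).dist (F A) (F B) = (p.map F).length :=
    (p.map F).dist_eq_length_of_apply_add_length_le (φ := fun S => finrank K ↥(S.1 ⊓ (f B).1))
      (fun _ _ => GrassmannGraph.finrank_inf_le_finrank_inf_add_one (f B).1)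
      (by
        change finrank K ↥((f A).1 ⊓ (f B).1) + _ ≤ finrank K ↥((f B).1 ⊓ (f B).1)
        rw [hinter, hinter, SimpleGraph.Walk.length_map, Finset.inter_self, B.2]
        omega)
  rw [hJ, ← p.length_map F]
  exact hG

theorem stmt4 (K V : Type*) [DivisionRing K] [AddCommGroup V] [Module K V]
    [FiniteDimensional K V] (n k n' : ℕ) (hn : finrank K V = n) (hk : 2 * k ≤ n)
    (P : Fin n' → Submodule K V) (hinj : Function.Injective P)
    (hone : ∀ i, finrank K ↥(P i) = 1)
    (hind : ∀ s : Finset (Fin n'), s.card ≤ 2 * k → finrank K ↥(s.sup P) = s.card)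
    (f : {A : Finset (Fin n') // A.card = k} → {S : Submodule K V // finrank K S = k})
    (hf : ∀ A, (f A).1 = A.1.sup P) :
    ∀ A B, (GrassmannGraph K V k).dist (f A) (f B) = (JohnsonGraph n' k).dist A B :=
  stmt4_general K V k n' P hind f hf
end

section
/- The annihilator map is distance-preserving: for any k-dimensional subspaces S, U of V, the distance between S⁰ and U⁰ in Γ_{n-k}(V*) equals the distance between S and U in Γ_k(V). -/
open Module

/-!
`S ↦ S⁰` is a bijection from `k`-subspaces of `V` to `(n - k)`-subspaces of `V*`, inverted
by the dual coannihilator. Since `S⁰ ∩ U⁰ = (S + U)⁰`, we get `dim (S⁰ ∩ U⁰) = n - dim (S + U)`,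
and for distinct `k`-subspaces `dim (S ∩ U) = k - 1` iff `dim (S + U) = k + 1`. So the
annihilator map is a graph isomorphism `Γ_k(V) ≃g Γ_{n-k}(V*)`, and graph isomorphisms
preserve distances.
-/

namespace SimpleGraph

variable {V W : Type*} {G : SimpleGraph V} {H : SimpleGraph W}

lemma Hom.edist_map_le (f : G →g H) (u v : V) : H.edist (f u) (f v) ≤ G.edist u v :=
  le_iInf fun p => (edist_le (p.map f)).trans_eq (by rw [Walk.length_map])

lemma Iso.edist_eq (φ : G ≃g H) (u v : V) : H.edist (φ u) (φ v) = G.edist u v :=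
  le_antisymm (Hom.edist_map_le φ.toHom u v) <| by
    simpa using Hom.edist_map_le φ.symm.toHom (φ u) (φ v)

lemma Iso.dist_eq (φ : G ≃g H) (u v : V) : H.dist (φ u) (φ v) = G.dist u v :=
  congrArg ENat.toNat (φ.edist_eq u v)

end SimpleGraph

lemma Submodule.lt_finrank_sup_of_ne {K V : Type*} [Field K] [AddCommGroup V] [Module K V]
    [FiniteDimensional K V] {k : ℕ} {S U : Submodule K V} (hS : finrank K S = k)
    (hU : finrank K U = k) (hne : S ≠ U) : k < finrank K ↥(S ⊔ U) := by
  by_contra! hle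
  have hSU : S = S ⊔ U := eq_of_le_of_finrank_le le_sup_left (hS ▸ hle)
  exact hne (eq_of_le_of_finrank_eq (le_sup_right.trans hSU.ge) (hU.trans hS.symm)).symm

lemma Subspace.finrank_dualAnnihilator {K V : Type*} [Field K] [AddCommGroup V] [Module K V]
    [FiniteDimensional K V] (W : Subspace K V) :
    finrank K W.dualAnnihilator = finrank K V - finrank K W := by
  have := W.finrank_add_finrank_dualAnnihilator_eq
  omega

namespace GrassmannGraph

variable {K V : Type*} [Field K] [AddCommGroup V] [Module K V] [FiniteDimensional K V] {k : ℕ}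

lemma adj_iff_finrank_sup {S U : {S : Submodule K V // finrank K S = k}} :
    (GrassmannGraph K V k).Adj S U ↔ S ≠ U ∧ finrank K ↥(S.1 ⊔ U.1) = k + 1 := by
  refine and_congr_right fun hne => ?_
  have hlt := Submodule.lt_finrank_sup_of_ne S.2 U.2 (Subtype.coe_ne_coe.mpr hne)
  have hsum := Submodule.finrank_sup_add_finrank_inf_eq S.1 U.1
  rw [S.2, U.2] at hsum
  omega

noncomputable def dualAnnihilatorIso (hk : k ≤ finrank K V) :
    GrassmannGraph K V k ≃g GrassmannGraph K (Dual K V) (finrank K V - k) where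
  toFun S := ⟨S.1.dualAnnihilator, by rw [Subspace.finrank_dualAnnihilator, S.2]⟩
  invFun T := ⟨T.1.dualCoannihilator, by
    have := Subspace.finrank_add_finrank_dualCoannihilator_eq T.1
    omega⟩
  left_inv S := Subtype.ext Subspace.dualAnnihilator_dualCoannihilator_eq
  right_inv T := Subtype.ext Subspace.dualCoannihilator_dualAnnihilator_eq
  map_rel_iff' {S U} := by
    change _ ≠ _ ∧ finrank K ↥(S.1.dualAnnihilator ⊓ U.1.dualAnnihilator) = _ ↔ _
    rw [adj_iff_finrank_sup, Ne, Subtype.ext_iff, Equiv.coe_fn_mk, Subspace.dualAnnihilator_inj,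
      ← Submodule.dualAnnihilator_sup_eq, Subspace.finrank_dualAnnihilator, ← Ne,
      Subtype.coe_ne_coe]
    refine and_congr_right fun hne => ?_
    have hlt := Submodule.lt_finrank_sup_of_ne S.2 U.2 (Subtype.coe_ne_coe.mpr hne)
    have hle := Submodule.finrank_le (S.1 ⊔ U.1)
    omega

end GrassmannGraph

theorem stmt9_general (K V : Type*) [Field K] [AddCommGroup V] [Module K V]
    [FiniteDimensional K V] (n k : ℕ) (hn : finrank K V = n)
    (S U : {S : Submodule K V // finrank K S = k})
    (S' U' : {T : Submodule K (Module.Dual K V) // finrank K T = n - k})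
    (hS' : S'.1 = S.1.dualAnnihilator) (hU' : U'.1 = U.1.dualAnnihilator) :
    (GrassmannGraph K (Module.Dual K V) (n - k)).dist S' U' =
      (GrassmannGraph K V k).dist S U := by
  subst hn
  have hk : k ≤ finrank K V := S.2 ▸ Submodule.finrank_le S.1
  obtain rfl : S' = GrassmannGraph.dualAnnihilatorIso hk S := Subtype.ext hS'
  obtain rfl : U' = GrassmannGraph.dualAnnihilatorIso hk U := Subtype.ext hU'
  exact (GrassmannGraph.dualAnnihilatorIso hk).dist_eq S U

theorem stmt9 (K V : Type*) [Field K] [AddCommGroup V] [Module K V]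
    [FiniteDimensional K V] (n k : ℕ) (hn : finrank K V = n)
    (hk1 : 1 ≤ k) (hk2 : k ≤ n - 1)
    (S U : {S : Submodule K V // finrank K S = k})
    (S' U' : {T : Submodule K (Module.Dual K V) // finrank K T = n - k})
    (hS' : S'.1 = S.1.dualAnnihilator) (hU' : U'.1 = U.1.dualAnnihilator) :
    (GrassmannGraph K (Module.Dual K V) (n - k)).dist S' U' =
      (GrassmannGraph K V k).dist S U :=
  stmt9_general K V n k hn S U S' U' hS' hU'
end

section
/- The intersection of two distinct maximal cliques of the Grassmann graph Γ_k(V) (1 < k < n-1) is either empty, a single vertex, or a line [M,N]_k = {S : M ⊂ S ⊂ N} with dim M = k-1, dim N = k+1; in particular, the intersection of a star [M⟩_k and a top ⟨N]_k is nonempty with more than one element if and only if M ⊂ N, in which case it equals the line [M,N]_k. -/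
open Module

/-!
Two adjacent vertices `S, U` of `Γ_k(V)` lie in the star `[S ⊓ U⟩_k` and the top
`⟨S ⊔ U]_k`. Every common neighbour of `S` and `U` lies in one of them, and no clique can have a
member outside the star and another outside the top, so a maximal clique through `S` and `U` is
that star or that top. Hence two distinct maximal cliques sharing two vertices are this star and
this top, and meet in the line `[S ⊓ U, S ⊔ U]_k`. Conversely, for `M ⊆ N` of dimensions `k - 1`
and `k + 1`, adjoining to `M` two suitably chosen vectors of `N` gives two vertices of that line.
-/

namespace GrassmannGraph

variable {K V : Type*} [DivisionRing K] [AddCommGroup V] [Module K V] [FiniteDimensional K V]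
  {k : ℕ}

local notation "Gr " k:max => {S : Submodule K V // finrank K S = k}

/-- The star `[M⟩_k` and the top `⟨N]_k`. -/
def star (k : ℕ) (M : Submodule K V) : Set (Gr k) := {S | M ≤ S.1}

def top (k : ℕ) (N : Submodule K V) : Set (Gr k) := {S | S.1 ≤ N}

theorem eq_of_val_le {S U : Gr k} (h : S.1 ≤ U.1) : S = U :=
  Subtype.ext (Submodule.eq_of_le_of_finrank_eq h (by rw [S.2, U.2]))

theorem finrank_lt_of_lt {S : Gr k} {A : Submodule K V} (h : A < S.1) : finrank K A < k :=
  S.2 ▸ Submodule.finrank_lt_finrank_of_lt h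

theorem finrank_sup_of_adj {S U : Gr k} (h : (GrassmannGraph K V k).Adj S U) :
    finrank K ↥(S.1 ⊔ U.1) = k + 1 := by
  have hsum := Submodule.finrank_sup_add_finrank_inf_eq S.1 U.1
  have hlt : S.1 ⊓ U.1 < S.1 :=
    inf_le_left.lt_of_ne fun hSU => h.1 (eq_of_val_le (hSU ▸ inf_le_right))
  have := finrank_lt_of_lt hlt
  rw [S.2, U.2, h.2] at hsum
  omega

theorem star_isClique {M : Submodule K V} (hM : finrank K M = k - 1) :
    (GrassmannGraph K V k).IsClique (star k M) := by
  intro S hS U hU hSU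
  have hlt : S.1 ⊓ U.1 < S.1 :=
    inf_le_left.lt_of_ne fun h => hSU (eq_of_val_le (h ▸ inf_le_right))
  have hle : k - 1 ≤ finrank K ↥(S.1 ⊓ U.1) := hM ▸ Submodule.finrank_mono (le_inf hS hU : M ≤ _)
  have := finrank_lt_of_lt hlt
  exact ⟨hSU, by omega⟩

theorem top_isClique {N : Submodule K V} (hN : finrank K N = k + 1) :
    (GrassmannGraph K V k).IsClique (top k N) := by
  intro S hS U hU hSU
  have hsum := Submodule.finrank_sup_add_finrank_inf_eq S.1 U.1
  have hlt : S.1 < S.1 ⊔ U.1 :=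
    le_sup_left.lt_of_ne fun h => hSU (eq_of_val_le (h ▸ le_sup_right)).symm
  have h₁ := Submodule.finrank_lt_finrank_of_lt hlt
  have h₂ := Submodule.finrank_mono (sup_le hS hU : _ ≤ N)
  have := S.2
  have := U.2
  exact ⟨hSU, by omega⟩

/-- Either `T ⊓ S = T ⊓ U`, which then is `S ⊓ U`, or these two hyperplanes of `T` span `T`. -/
theorem inf_le_or_le_sup {S U T : Gr k} (hSU : (GrassmannGraph K V k).Adj S U)
    (hTS : (GrassmannGraph K V k).Adj T S) (hTU : (GrassmannGraph K V k).Adj T U) :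
    S.1 ⊓ U.1 ≤ T.1 ∨ T.1 ≤ S.1 ⊔ U.1 := by
  by_cases hc : T.1 ⊓ S.1 = T.1 ⊓ U.1
  · left
    have hle : T.1 ⊓ S.1 ≤ S.1 ⊓ U.1 := le_inf inf_le_right (hc ▸ inf_le_right)
    rw [← Submodule.eq_of_le_of_finrank_eq hle (by rw [hTS.2, hSU.2])]
    exact inf_le_left
  · right
    have hlt : T.1 ⊓ S.1 < T.1 ⊓ S.1 ⊔ T.1 ⊓ U.1 := by
      refine le_sup_left.lt_of_ne fun h => hc ?_
      exact (Submodule.eq_of_le_of_finrank_eq (h ▸ le_sup_right) (by rw [hTU.2, hTS.2])).symm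
    have hdim : k - 1 < finrank K ↥(T.1 ⊓ S.1 ⊔ T.1 ⊓ U.1) :=
      hTS.2 ▸ Submodule.finrank_lt_finrank_of_lt hlt
    have hT : T.1 ⊓ S.1 ⊔ T.1 ⊓ U.1 = T.1 :=
      Submodule.eq_of_le_of_finrank_le (sup_le inf_le_left inf_le_left) (by rw [T.2]; omega)
    rw [← hT]
    exact sup_le_sup inf_le_right inf_le_right

/-- If `T₁ ⊄ N`, then `T₁ ∩ N` is a hyperplane of `T₁` containing the hyperplane `T₁ ∩ T₂`,
so the two coincide and `M ⊆ T₁ ∩ N ⊆ T₂`. -/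
theorem le_or_le_of_adj {M N : Submodule K V} {T₁ T₂ : Gr k}
    (hT : (GrassmannGraph K V k).Adj T₁ T₂) (hMN : M ≤ N) (hM : M ≤ T₁.1) (hN : T₂.1 ≤ N) :
    M ≤ T₂.1 ∨ T₁.1 ≤ N := by
  refine or_iff_not_imp_right.2 fun hT₁N => ?_
  have hle : T₁.1 ⊓ T₂.1 ≤ T₁.1 ⊓ N := inf_le_inf_left _ hN
  have hlt : T₁.1 ⊓ N < T₁.1 := inf_le_left.lt_of_ne fun h => hT₁N (inf_eq_left.1 h)
  have hdim₁ := finrank_lt_of_lt hlt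
  have hdim₂ : k - 1 ≤ finrank K ↥(T₁.1 ⊓ N) := hT.2 ▸ Submodule.finrank_mono hle
  have heq : T₁.1 ⊓ T₂.1 = T₁.1 ⊓ N :=
    Submodule.eq_of_le_of_finrank_eq hle (by rw [hT.2]; omega)
  calc M ≤ T₁.1 ⊓ N := le_inf hM hMN
    _ = T₁.1 ⊓ T₂.1 := heq.symm
    _ ≤ T₂.1 := inf_le_right

theorem subset_star_or_subset_top {E : Set (Gr k)} (hE : (GrassmannGraph K V k).IsClique E)
    {S U : Gr k} (hS : S ∈ E) (hU : U ∈ E) (hSU : (GrassmannGraph K V k).Adj S U) :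
    E ⊆ star k (S.1 ⊓ U.1) ∨ E ⊆ top k (S.1 ⊔ U.1) := by
  have hdich : ∀ T ∈ E, S.1 ⊓ U.1 ≤ T.1 ∨ T.1 ≤ S.1 ⊔ U.1 := by
    intro T hT
    by_cases hTS : T = S
    · exact .inl (hTS ▸ inf_le_left)
    by_cases hTU : T = U
    · exact .inl (hTU ▸ inf_le_right)
    exact inf_le_or_le_sup hSU (hE hT hS hTS) (hE hT hU hTU)
  by_contra! h
  obtain ⟨T₂, hT₂, hMT₂⟩ := Set.not_subset.1 h.1
  obtain ⟨T₁, hT₁, hT₁N⟩ := Set.not_subset.1 h.2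
  have hMT₁ : S.1 ⊓ U.1 ≤ T₁.1 := (hdich T₁ hT₁).resolve_right hT₁N
  have hT₂N : T₂.1 ≤ S.1 ⊔ U.1 := (hdich T₂ hT₂).resolve_left hMT₂
  have hne : T₁ ≠ T₂ := fun h => hMT₂ (h ▸ hMT₁)
  exact (le_or_le_of_adj (hE hT₁ hT₂ hne) (inf_le_left.trans le_sup_left) hMT₁ hT₂N).elim
    hMT₂ hT₁N

theorem eq_star_or_eq_top {E : Set (Gr k)} (hE : (GrassmannGraph K V k).IsClique E)
    (hEmax : ∀ F, (GrassmannGraph K V k).IsClique F → E ⊆ F → E = F) {S U : Gr k}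
    (hS : S ∈ E) (hU : U ∈ E) (hSU : (GrassmannGraph K V k).Adj S U) :
    E = star k (S.1 ⊓ U.1) ∨ E = top k (S.1 ⊔ U.1) :=
  (subset_star_or_subset_top hE hS hU hSU).imp (hEmax _ (star_isClique hSU.2))
    (hEmax _ (top_isClique (finrank_sup_of_adj hSU)))

theorem inter_eq_star_inter_top {C D : Set (Gr k)} (hC : (GrassmannGraph K V k).IsClique C)
    (hCmax : ∀ E, (GrassmannGraph K V k).IsClique E → C ⊆ E → C = E)
    (hD : (GrassmannGraph K V k).IsClique D)
    (hDmax : ∀ E, (GrassmannGraph K V k).IsClique E → D ⊆ E → D = E) (hCD : C ≠ D)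
    {S U : Gr k} (hS : S ∈ C ∩ D) (hU : U ∈ C ∩ D) (hne : S ≠ U) :
    C ∩ D = star k (S.1 ⊓ U.1) ∩ top k (S.1 ⊔ U.1) := by
  have hSU := hC hS.1 hU.1 hne
  rcases eq_star_or_eq_top hC hCmax hS.1 hU.1 hSU with rfl | rfl <;>
    rcases eq_star_or_eq_top hD hDmax hS.2 hU.2 hSU with rfl | rfl
  · exact absurd rfl hCD
  · rfl
  · exact Set.inter_comm _ _
  · exact absurd rfl hCD

theorem exists_mem_star_inter_top (hk : 1 ≤ k) {M N : Submodule K V}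
    (hM : finrank K M = k - 1) (hMN : M ≤ N) {v : V} (hvN : v ∈ N) (hvM : v ∉ M) :
    ∃ S ∈ star k M ∩ top k N, v ∈ S.1 :=
  ⟨⟨M ⊔ K ∙ v, by rw [Submodule.finrank_sup_span_singleton hvM, hM]; omega⟩,
    ⟨(le_sup_left : M ≤ M ⊔ K ∙ v), sup_le hMN ((Submodule.span_singleton_le_iff_mem v N).2 hvN)⟩,
    Submodule.mem_sup_right (Submodule.mem_span_singleton_self v)⟩

theorem star_inter_top_nontrivial (hk : 1 ≤ k) {M N : Submodule K V}
    (hM : finrank K M = k - 1) (hN : finrank K N = k + 1) (hMN : M ≤ N) :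
    (star k M ∩ top k N).Nontrivial := by
  obtain ⟨w, hwN, hwM⟩ := SetLike.exists_of_lt (hMN.lt_of_ne (by rintro rfl; omega))
  obtain ⟨S₂, hS₂, -⟩ := exists_mem_star_inter_top hk hM hMN hwN hwM
  have hS₂N : S₂.1 < N := hS₂.2.lt_of_ne fun h => by have := S₂.2; rw [h] at this; omega
  obtain ⟨v, hvN, hvS₂⟩ := SetLike.exists_of_lt hS₂N
  obtain ⟨S₁, hS₁, hvS₁⟩ := exists_mem_star_inter_top hk hM hMN hvN fun h => hvS₂ (hS₂.1 h)
  exact ⟨S₁, hS₁, S₂, hS₂, fun h => hvS₂ (h ▸ hvS₁)⟩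

theorem star_inter_top_nontrivial_iff (hk : 1 ≤ k) {M N : Submodule K V}
    (hM : finrank K M = k - 1) (hN : finrank K N = k + 1) :
    (star k M ∩ top k N).Nontrivial ↔ M ≤ N :=
  ⟨fun ⟨_, hS, _⟩ => hS.1.trans hS.2, star_inter_top_nontrivial hk hM hN⟩

end GrassmannGraph

theorem stmt11_general (K V : Type*) [DivisionRing K] [AddCommGroup V] [Module K V]
    [FiniteDimensional K V] (k : ℕ)
    (hk1 : 1 < k) :
    (∀ C D : Set {S : Submodule K V // finrank K S = k},
      (GrassmannGraph K V k).IsClique C →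
      (∀ E, (GrassmannGraph K V k).IsClique E → C ⊆ E → C = E) →
      (GrassmannGraph K V k).IsClique D →
      (∀ E, (GrassmannGraph K V k).IsClique E → D ⊆ E → D = E) →
      C ≠ D →
      C ∩ D = ∅ ∨ (∃ S, C ∩ D = {S}) ∨
        (∃ M N : Submodule K V, finrank K ↥M = k - 1 ∧ finrank K ↥N = k + 1 ∧ M ≤ N ∧
          C ∩ D = {S | M ≤ S.1 ∧ S.1 ≤ N})) ∧
    (∀ M N : Submodule K V, finrank K ↥M = k - 1 → finrank K ↥N = k + 1 →
      (({S : {S : Submodule K V // finrank K S = k} | M ≤ S.1} ∩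
        {S | S.1 ≤ N}).Nontrivial ↔ M ≤ N) ∧
      (M ≤ N →
        {S : {S : Submodule K V // finrank K S = k} | M ≤ S.1} ∩ {S | S.1 ≤ N} =
          {S | M ≤ S.1 ∧ S.1 ≤ N})) := by
  refine ⟨fun C D hC hCmax hD hDmax hCD => ?_, fun M N hM hN =>
    ⟨GrassmannGraph.star_inter_top_nontrivial_iff hk1.le hM hN, fun _ => rfl⟩⟩
  rcases (C ∩ D).subsingleton_or_nontrivial with h | ⟨S, hS, U, hU, hne⟩
  · exact h.eq_empty_or_singleton.imp_right .inl
  have hSU := hC hS.1 hU.1 hne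
  exact .inr <| .inr ⟨S.1 ⊓ U.1, S.1 ⊔ U.1, hSU.2, GrassmannGraph.finrank_sup_of_adj hSU,
    inf_le_left.trans le_sup_left,
    GrassmannGraph.inter_eq_star_inter_top hC hCmax hD hDmax hCD hS hU hne⟩

theorem stmt11 (K V : Type*) [DivisionRing K] [AddCommGroup V] [Module K V]
    [FiniteDimensional K V] (n k : ℕ) (hn : finrank K V = n)
    (hk1 : 1 < k) (hk2 : k < n - 1) :
    (∀ C D : Set {S : Submodule K V // finrank K S = k},
      (GrassmannGraph K V k).IsClique C →
      (∀ E, (GrassmannGraph K V k).IsClique E → C ⊆ E → C = E) →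
      (GrassmannGraph K V k).IsClique D →
      (∀ E, (GrassmannGraph K V k).IsClique E → D ⊆ E → D = E) →
      C ≠ D →
      C ∩ D = ∅ ∨ (∃ S, C ∩ D = {S}) ∨
        (∃ M N : Submodule K V, finrank K ↥M = k - 1 ∧ finrank K ↥N = k + 1 ∧ M ≤ N ∧
          C ∩ D = {S | M ≤ S.1 ∧ S.1 ≤ N})) ∧
    (∀ M N : Submodule K V, finrank K ↥M = k - 1 → finrank K ↥N = k + 1 →
      (({S : {S : Submodule K V // finrank K S = k} | M ≤ S.1} ∩
        {S | S.1 ≤ N}).Nontrivial ↔ M ≤ N) ∧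
      (M ≤ N →
        {S : {S : Submodule K V // finrank K S = k} | M ≤ S.1} ∩ {S | S.1 ≤ N} =
          {S | M ≤ S.1 ∧ S.1 ≤ N})) :=
  stmt11_general K V k hk1
end

section
/- Let B be a base of V and A_k the associated apartment of the Grassmannian G_k(V) (all k-dimensional subspaces spanned by subsets of B). Then the restriction of the Grassmann graph Γ_k(V) to A_k is isomorphic to the Johnson graph J(n,k), and the inclusion A_k → G_k(V) is an isometric embedding of J(n,k) in Γ_k(V). -/
open Module

/-!
Spans of basis vectors meet in the span of the common basis vectors, so
`dim (⟨A⟩ ⊓ ⟨B⟩) = |A ∩ B|`, which identifies the two adjacency relations. In `Γ_k(V)` one step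
raises `dim (S ⊓ U)` by at most one, so `d(S, U) ≥ k - dim (S ⊓ U)`; in `J(n, k)` exchanging one
element at a time reaches `B` from `A` in `k - |A ∩ B|` steps. Hence both distances equal
`k - |A ∩ B|`.
-/

open SimpleGraph

namespace Module.Basis

variable {R M ι : Type*}

theorem span_image_inf_span_image [Semiring R] [AddCommMonoid M] [Module R M] (b : Basis ι R M)
    (s t : Set ι) :
    Submodule.span R (b '' s) ⊓ Submodule.span R (b '' t) = Submodule.span R (b '' (s ∩ t)) := by
  ext x
  simp only [Submodule.mem_inf, b.mem_span_image, Set.subset_inter_iff]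

theorem span_image_finset_injective [Semiring R] [Nontrivial R] [AddCommMonoid M] [Module R M]
    (b : Basis ι R M) : Function.Injective fun A : Finset ι ↦ Submodule.span R (b '' A) := by
  intro A B (hAB : Submodule.span R (b '' A) = Submodule.span R (b '' B))
  ext i
  rw [← Finset.mem_coe, ← b.self_mem_span_image, hAB, b.self_mem_span_image, Finset.mem_coe]

theorem finrank_span_image_finset [Ring R] [Nontrivial R] [StrongRankCondition R] [AddCommGroup M]
    [Module R M] (b : Basis ι R M) (A : Finset ι) : finrank R (Submodule.span R (b '' A)) = A.card := by
  have hrange : b '' A = Set.range (b ∘ ((↑) : A → ι)) := by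
    ext; simp
  rw [hrange, finrank_span_eq_card (b.linearIndependent.comp _ Subtype.val_injective),
    Fintype.card_coe]

end Module.Basis

theorem Submodule.finrank_inf_add_finrank_inf_le {K V : Type*} [DivisionRing K] [AddCommGroup V]
    [Module K V] [FiniteDimensional K V] (S T U : Submodule K V) :
    finrank K ↥(T ⊓ U) + finrank K ↥(S ⊓ T) ≤ finrank K T + finrank K ↥(S ⊓ U) := by
  rw [← Submodule.finrank_sup_add_finrank_inf_eq]
  exact add_le_add (Submodule.finrank_mono (sup_le inf_le_left inf_le_right))
    (Submodule.finrank_mono (le_inf (inf_le_right.trans inf_le_left)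
      (inf_le_left.trans inf_le_right)))

namespace GrassmannGraph

variable {K V : Type*} [DivisionRing K] [AddCommGroup V] [Module K V] [FiniteDimensional K V]
  {k : ℕ}

/-- Along an edge the dimension of the intersection with a fixed subspace grows by at most one. -/
theorem le_finrank_inf_add_length {S U : {S : Submodule K V // finrank K S = k}}
    (w : (GrassmannGraph K V k).Walk S U) : k ≤ finrank K ↥(S.1 ⊓ U.1) + w.length := by
  induction w with
  | @nil S => rw [Walk.length_nil, add_zero, inf_idem, S.2]
  | @cons S T U hST _ ih =>
    have := Submodule.finrank_inf_add_finrank_inf_le S.1 T.1 U.1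
    rw [T.2, hST.2] at this
    rw [Walk.length_cons]
    omega

end GrassmannGraph

namespace JohnsonGraph

variable {n k : ℕ}

-- `A'` exchanges an element of `A \ B` for one of `B \ A`.
theorem exists_adj_card_inter_eq_succ {A B : {A : Finset (Fin n) // A.card = k}} (hAB : A ≠ B) :
    ∃ A', (JohnsonGraph n k).Adj A A' ∧ (A'.1 ∩ B.1).card = (A.1 ∩ B.1).card + 1 := by
  have hcard : (A.1 \ B.1).card = (B.1 \ A.1).card := by
    rw [Finset.card_sdiff_comm (A.2.trans B.2.symm)]
  obtain ⟨a, ha⟩ : (A.1 \ B.1).Nonempty := by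
    rw [Finset.nonempty_iff_ne_empty, Ne, Finset.sdiff_eq_empty_iff_subset]
    exact fun hsub ↦ hAB (Subtype.ext (Finset.eq_of_subset_of_card_le hsub (B.2.trans A.2.symm).le))
  obtain ⟨c, hc⟩ : (B.1 \ A.1).Nonempty := by
    rw [← Finset.card_pos, ← hcard]
    exact Finset.card_pos.2 ⟨a, ha⟩
  rw [Finset.mem_sdiff] at ha hc
  have hc' : c ∉ A.1.erase a := fun h ↦ hc.2 (Finset.mem_of_mem_erase h)
  refine ⟨⟨insert c (A.1.erase a), ?_⟩, ⟨?_, ?_⟩, ?_⟩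
  · have hk : 0 < k := A.2 ▸ Finset.card_pos.2 ⟨a, ha.1⟩
    rw [Finset.card_insert_of_notMem hc', Finset.card_erase_of_mem ha.1, A.2]
    omega
  · exact fun h ↦ hc.2 (by rw [h]; exact Finset.mem_insert_self _ _)
  · rw [Finset.inter_comm, Finset.insert_inter_of_notMem hc.2,
      Finset.inter_eq_left.2 (Finset.erase_subset _ _), Finset.card_erase_of_mem ha.1, A.2]
  · rw [Finset.insert_inter_of_mem hc.1, Finset.erase_inter, Finset.erase_eq_of_notMem
      (fun h ↦ ha.2 (Finset.mem_inter.1 h).2), Finset.card_insert_of_notMem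
      (fun h ↦ hc.2 (Finset.mem_inter.1 h).1)]

theorem exists_walk_length_add_card_inter (A B : {A : Finset (Fin n) // A.card = k}) :
    ∃ w : (JohnsonGraph n k).Walk A B, w.length + (A.1 ∩ B.1).card = k := by
  by_cases hAB : A = B
  · subst hAB
    exact ⟨.nil, by rw [Walk.length_nil, zero_add, Finset.inter_self, A.2]⟩
  · obtain ⟨A', hadj, hcard⟩ := exists_adj_card_inter_eq_succ hAB
    obtain ⟨w, hw⟩ := exists_walk_length_add_card_inter A' B
    exact ⟨.cons hadj w, by rw [Walk.length_cons]; omega⟩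
termination_by k - (A.1 ∩ B.1).card
decreasing_by
  have := A'.2 ▸ Finset.card_le_card (Finset.inter_subset_left : A'.1 ∩ B.1 ⊆ A'.1)
  omega

end JohnsonGraph

theorem stmt13_general (K V : Type*) [DivisionRing K] [AddCommGroup V] [Module K V]
    [FiniteDimensional K V] (n k : ℕ) (b : Basis (Fin n) K V)
    (g : {A : Finset (Fin n) // A.card = k} → {S : Submodule K V // finrank K S = k})
    (hg : ∀ A, (g A).1 = Submodule.span K (b '' ↑A.1)) :
    Function.Injective g ∧
    (∀ A B, (GrassmannGraph K V k).Adj (g A) (g B) ↔ (JohnsonGraph n k).Adj A B) ∧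
    (∀ A B, (GrassmannGraph K V k).dist (g A) (g B) = (JohnsonGraph n k).dist A B) := by
  have hinj : Function.Injective g := fun A B h ↦
    Subtype.ext <| b.span_image_finset_injective <| by simpa only [hg] using congrArg Subtype.val h
  have hdim (A B) : finrank K ↥((g A).1 ⊓ (g B).1) = (A.1 ∩ B.1).card := by
    rw [hg, hg, b.span_image_inf_span_image, ← Finset.coe_inter, b.finrank_span_image_finset]
  have hadj (A B) : (GrassmannGraph K V k).Adj (g A) (g B) ↔ (JohnsonGraph n k).Adj A B :=
    and_congr hinj.ne_iff (by rw [hdim])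
  refine ⟨hinj, hadj, fun A B ↦ ?_⟩
  let f : JohnsonGraph n k →g GrassmannGraph K V k := ⟨g, (hadj _ _).2⟩
  obtain ⟨wJ, hwJ⟩ := JohnsonGraph.exists_walk_length_add_card_inter A B
  obtain ⟨wMin, hwMin⟩ := wJ.reachable.exists_walk_length_eq_dist
  obtain ⟨wG, hwG⟩ : ∃ w : (GrassmannGraph K V k).Walk (g A) (g B),
      w.length = (GrassmannGraph K V k).dist (g A) (g B) :=
    (wJ.map f).reachable.exists_walk_length_eq_dist
  have hlower := GrassmannGraph.le_finrank_inf_add_length wG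
  have hupper : (GrassmannGraph K V k).dist (g A) (g B) ≤ (wMin.map f).length := dist_le _
  have hJ := dist_le wJ
  rw [hwG, hdim] at hlower
  rw [Walk.length_map, hwMin] at hupper
  omega

theorem stmt13 (K V : Type*) [DivisionRing K] [AddCommGroup V] [Module K V]
    [FiniteDimensional K V] (n k : ℕ) (hn : finrank K V = n)
    (hk1 : 1 ≤ k) (hk2 : k ≤ n - 1) (b : Basis (Fin n) K V)
    (g : {A : Finset (Fin n) // A.card = k} → {S : Submodule K V // finrank K S = k})
    (hg : ∀ A, (g A).1 = Submodule.span K (b '' ↑A.1)) :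
    Function.Injective g ∧
    (∀ A B, (GrassmannGraph K V k).Adj (g A) (g B) ↔ (JohnsonGraph n k).Adj A B) ∧
    (∀ A B, (GrassmannGraph K V k).dist (g A) (g B) = (JohnsonGraph n k).dist A B) :=
  stmt13_general K V n k b g hg
end

section
/- Let P_1,...,P_{m+1} be 1-dimensional subspaces of a vector space V over a division ring forming an m-simplex (any m of them independent, but the whole set dependent). Then every permutation of {P_1,...,P_{m+1}} extends to a linear automorphism of V permuting these subspaces accordingly. -/
/-!
Choose generators `v i` of the lines `P i`. Any `m` of them are independent while all `m + 1`
are not, so a nontrivial relation `∑ c i • v i = 0` has all `c i ≠ 0`; rescaling gives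
generators `x i` with `∑ x i = 0`, any `m` of which are a basis of `W = ⨆ i, P i`. For a
permutation `σ`, the families `x` and `x ∘ σ` are two such frames of `W`. The change of basis of
`W` sending `x i ↦ x (σ i)` for `i ≠ k`, extended to `V` through a complement of `W`, also sends
`x k = -∑_{i ≠ k} x i` to `x (σ k)`, hence maps each `P i` onto `P (σ i)`.
-/

open Module Submodule

section

variable {K V ι : Type*} [DivisionRing K] [AddCommGroup V] [Module K V]

theorem linearIndepOn_iff_finrank_span_image {v : ι → V} {s : Finset ι} :
    LinearIndepOn K v s ↔ finrank K (span K (v '' s)) = s.card := by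
  rw [LinearIndepOn, linearIndependent_iff_card_eq_finrank_span, Set.finrank,
    ← Set.image_eq_range, eq_comm]
  simp only [Finset.coe_sort_coe, Fintype.card_coe]

theorem Finset.sup_span_singleton (v : ι → V) (s : Finset ι) :
    s.sup (fun i => K ∙ v i) = span K (v '' s) := by
  rw [Set.image_eq_iUnion, span_iUnion₂, Finset.sup_eq_iSup]
  simp only [Finset.mem_coe]

theorem LinearEquiv.exists_extend (W : Submodule K V) (e : W ≃ₗ[K] W) :
    ∃ u : V ≃ₗ[K] V, ∀ w : W, u w = e w := by
  obtain ⟨C, hC⟩ := W.exists_isCompl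
  refine ⟨(prodEquivOfIsCompl W C hC).symm ≪≫ₗ e.prodCongr (LinearEquiv.refl K C) ≪≫ₗ
    prodEquivOfIsCompl W C hC, fun w => ?_⟩
  simp

theorem exists_linearEquiv_apply_eq_of_span_eq {κ : Type*} {b b' : κ → V}
    (hb : LinearIndependent K b) (hb' : LinearIndependent K b')
    (h : span K (Set.range b) = span K (Set.range b')) :
    ∃ u : V ≃ₗ[K] V, ∀ i, u (b i) = b' i := by
  let B := (Basis.span hb).map (LinearEquiv.ofEq _ _ h)
  obtain ⟨u, hu⟩ := LinearEquiv.exists_extend _ (B.equiv (Basis.span hb') (Equiv.refl κ))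
  refine ⟨u, fun i => ?_⟩
  have hi := hu (B i)
  rw [Basis.equiv_apply, Equiv.refl_apply, Basis.span_apply] at hi
  simpa [B, Basis.span_apply] using hi

variable [Fintype ι]

variable (K) in
/-- In the normalization `P i = K ∙ x i` of a simplex, the paper's last generator
`x₁ + ⋯ + xₘ` is replaced by its negative, which makes the condition symmetric in all indices. -/
structure IsSimplexFrame (x : ι → V) : Prop where
  sum_eq_zero : ∑ i, x i = 0
  linearIndepOn_compl (k : ι) : LinearIndepOn K x {k}ᶜ

theorem IsSimplexFrame.comp_equiv {ι' : Type*} [Fintype ι'] {x : ι → V}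
    (hx : IsSimplexFrame K x) (σ : ι' ≃ ι) : IsSimplexFrame K (x ∘ σ) where
  sum_eq_zero := (σ.sum_comp x).trans hx.sum_eq_zero
  linearIndepOn_compl k := by
    rw [linearIndepOn_equiv, Set.image_compl_eq σ.bijective, Set.image_singleton]
    exact hx.linearIndepOn_compl (σ k)

variable [DecidableEq ι]

theorem exists_forall_ne_zero_sum_smul_eq_zero {v : ι → V}
    (hdep : ¬LinearIndependent K v) (hind : ∀ k, LinearIndepOn K v {k}ᶜ) :
    ∃ c : ι → K, (∀ k, c k ≠ 0) ∧ ∑ k, c k • v k = 0 := by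
  obtain ⟨c, hc, j, hj⟩ := Fintype.not_linearIndependent_iff.1 hdep
  refine ⟨c, fun k hk => hj ?_, hc⟩
  have hsum : ∑ i ∈ {k}ᶜ, c i • v i = 0 := by
    rwa [Fintype.sum_eq_add_sum_compl k, hk, zero_smul, zero_add] at hc
  obtain rfl | hjk := eq_or_ne j k
  · exact hk
  · have hind' : LinearIndepOn K v ↑({k}ᶜ : Finset ι) := by simpa using hind k
    exact linearIndepOn_finset_iff.1 hind' c hsum j (by simpa using hjk)

theorem eq_neg_sum_compl_of_sum_eq_zero {x : ι → V} (hx : ∑ i, x i = 0) (k : ι) :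
    x k = -∑ i ∈ {k}ᶜ, x i :=
  eq_neg_of_add_eq_zero_left ((Fintype.sum_eq_add_sum_compl k x).symm.trans hx)

theorem span_image_compl_eq_span_range {x : ι → V} (hx : ∑ i, x i = 0) (k : ι) :
    span K (x '' {k}ᶜ) = span K (Set.range x) := by
  have hk : x k ∈ span K (x '' {k}ᶜ) := by
    rw [eq_neg_sum_compl_of_sum_eq_zero hx k]
    exact neg_mem (sum_mem fun i hi => subset_span ⟨i, by simpa using hi, rfl⟩)
  refine le_antisymm (span_mono (Set.image_subset_range _ _)) (span_le.2 ?_)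
  rintro _ ⟨i, rfl⟩
  obtain rfl | hi := eq_or_ne i k
  · exact hk
  · exact subset_span ⟨i, hi, rfl⟩

theorem exists_isSimplexFrame_of_finrank_sup (P : ι → Submodule K V)
    (hone : ∀ i, finrank K (P i) = 1)
    (hind : ∀ k, finrank K ↥(({k}ᶜ : Finset ι).sup P) = ({k}ᶜ : Finset ι).card)
    (hdep : finrank K ↥(Finset.univ.sup P) < Fintype.card ι) :
    ∃ x : ι → V, IsSimplexFrame K x ∧ ∀ i, P i = K ∙ x i := by
  have hgen i : ∃ v, P i = K ∙ v := by
    obtain ⟨v, -, hv⟩ := (atom_iff_nonzero_span _).1 (isAtom_iff_finrank_eq_one.2 (hone i))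
    exact ⟨v, hv⟩
  choose v hv using hgen
  obtain rfl : P = fun i => K ∙ v i := funext hv
  have hli k : LinearIndepOn K v {k}ᶜ := by
    have hk := hind k
    rw [Finset.sup_span_singleton] at hk
    rw [← Finset.coe_singleton, ← Finset.coe_compl]
    exact linearIndepOn_iff_finrank_span_image.2 hk
  have hdep' : ¬LinearIndependent K v := by
    rw [Finset.sup_span_singleton] at hdep
    rw [← linearIndepOn_univ_iff, ← Finset.coe_univ, linearIndepOn_iff_finrank_span_image]
    exact hdep.ne
  obtain ⟨c, hc, hcv⟩ := exists_forall_ne_zero_sum_smul_eq_zero hdep' hli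
  exact ⟨fun i => c i • v i,
    ⟨hcv, fun k => (hli k).units_smul fun i => Units.mk0 (c i) (hc i)⟩,
    fun i => (span_singleton_smul_eq (hc i).isUnit _).symm⟩

theorem IsSimplexFrame.exists_linearEquiv_apply_eq {x y : ι → V} (hx : IsSimplexFrame K x)
    (hy : IsSimplexFrame K y) (h : span K (Set.range x) = span K (Set.range y)) :
    ∃ u : V ≃ₗ[K] V, ∀ i, u (x i) = y i := by
  cases isEmpty_or_nonempty ι with
  | inl _ => exact ⟨LinearEquiv.refl K V, isEmptyElim⟩
  | inr hι =>
    obtain ⟨k⟩ := hι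
    obtain ⟨u, hu⟩ := exists_linearEquiv_apply_eq_of_span_eq
      (hx.linearIndepOn_compl k) (hy.linearIndepOn_compl k) (by
        rw [← Set.image_eq_range, ← Set.image_eq_range,
          span_image_compl_eq_span_range hx.sum_eq_zero,
          span_image_compl_eq_span_range hy.sum_eq_zero, h])
    have hne i (hi : i ≠ k) : u (x i) = y i := hu ⟨i, hi⟩
    refine ⟨u, fun i => ?_⟩
    obtain rfl | hi := eq_or_ne i k
    · rw [eq_neg_sum_compl_of_sum_eq_zero hx.sum_eq_zero i, map_neg, map_sum,
        Finset.sum_congr rfl fun j hj => hne j (by simpa using hj),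
        ← eq_neg_sum_compl_of_sum_eq_zero hy.sum_eq_zero i]
    · exact hne i hi

end

theorem stmt17_general (K V : Type*) [DivisionRing K] [AddCommGroup V] [Module K V]
    (m : ℕ) (P : Fin (m + 1) → Submodule K V)
    (hone : ∀ i, finrank K ↥(P i) = 1)
    (hind : ∀ s : Finset (Fin (m + 1)), s.card ≤ m → finrank K ↥(s.sup P) = s.card)
    (hdep : finrank K ↥(Finset.univ.sup P) = m) :
    ∀ σ : Equiv.Perm (Fin (m + 1)),
      ∃ u : V ≃ₗ[K] V, ∀ i, (P i).map (u : V →ₗ[K] V) = P (σ i) := by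
  intro σ
  obtain ⟨x, hx, hPx⟩ := exists_isSimplexFrame_of_finrank_sup P hone
    (fun k => hind _ (by simp [Finset.card_compl])) (by simp [hdep])
  obtain ⟨u, hu⟩ := hx.exists_linearEquiv_apply_eq (hx.comp_equiv σ)
    (by rw [EquivLike.range_comp])
  refine ⟨u, fun i => ?_⟩
  rw [hPx, hPx, map_span, Set.image_singleton, LinearEquiv.coe_coe, hu, Function.comp_apply]

theorem stmt17 (K V : Type*) [DivisionRing K] [AddCommGroup V] [Module K V]
    (m : ℕ) (hm : 2 ≤ m) (hdim : (m : Cardinal) ≤ Module.rank K V)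
    (P : Fin (m + 1) → Submodule K V) (hinj : Function.Injective P)
    (hone : ∀ i, finrank K ↥(P i) = 1)
    (hind : ∀ s : Finset (Fin (m + 1)), s.card ≤ m → finrank K ↥(s.sup P) = s.card)
    (hdep : finrank K ↥(Finset.univ.sup P) = m) :
    ∀ σ : Equiv.Perm (Fin (m + 1)),
      ∃ u : V ≃ₗ[K] V, ∀ i, (P i).map (u : V →ₗ[K] V) = P (σ i) :=
  stmt17_general K V m P hone hind hdep
end
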